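/- Let ν be a nucleus on a pseudogroup S and let S_ν = {a ∈ S : ν(a) = a} with multiplication a · b = ν(ab). Then S_ν is an inverse semigroup, the natural partial order on S_ν coincides with the restriction of the natural partial order on S, and the map a ↦ ν(a) from S to S_ν is a surjective idempotent-pure semigroup homomorphism. -/

import Mathlib

/-!
Sandwiching `ab ≤ ν(a)ν(b) ≤ ν(ab)` gives `ν(ν(a)ν(b)) = ν(ab)`, so `a ↦ ν(a)` is multiplicative
and associativity and generalized inverses pass from `S` to `S_ν`. The heart of the matter is
that an idempotent `x` of `S_ν` is an idempotent of `S`: from `ν(x²) = x` we get `x² ≤ x`, which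
in an inverse semigroup forces `x²` to be idempotent, and then so is `x = ν(x²)`. Commutation
of idempotents, the comparison of the natural orders and idempotent-purity all follow.
-/

namespace InvPaper

/-- An inverse semigroup: a regular semigroup whose idempotents commute
(equivalently, each element has a unique generalized inverse `sinv`). -/
class InverseSemigroup (S : Type*) extends Semigroup S where
  sinv : S → S
  mul_sinv_mul : ∀ a : S, a * sinv a * a = a
  sinv_mul_sinv : ∀ a : S, sinv a * a * sinv a = sinv a
  idem_comm : ∀ e f : S, e * e = e → f * f = f → e * f = f * e

open InverseSemigroup

variable {S : Type*}

section Basic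
variable [InverseSemigroup S]

/-- `e` is an idempotent. -/
def idem (e : S) : Prop := e * e = e

/-- The natural partial order: `a ≤ b` iff `a = b * e` for some idempotent `e`. -/
def nle (a b : S) : Prop := ∃ e : S, idem e ∧ a = b * e

/-- `s` and `t` are compatible: `s⁻¹t` and `st⁻¹` are idempotents. -/
def compatible (s t : S) : Prop := idem (sinv s * t) ∧ idem (s * sinv t)

/-- `j` is the join (least upper bound) of `a` and `b` w.r.t. the natural partial order. -/
def isJoin (a b j : S) : Prop :=
  nle a j ∧ nle b j ∧ ∀ c : S, nle a c → nle b c → nle j c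

/-- `m` is the meet (greatest lower bound) of `a` and `b`. -/
def isMeet (a b m : S) : Prop :=
  nle m a ∧ nle m b ∧ ∀ z : S, nle z a → nle z b → nle z m

/-- `j` is the least upper bound of the set `A`. -/
def isJoinSet (A : Set S) (j : S) : Prop :=
  (∀ a ∈ A, nle a j) ∧ ∀ c : S, (∀ a ∈ A, nle a c) → nle j c

/-- A filter: a nonempty, downward-directed, upward-closed subset. -/
def IsFilter (F : Set S) : Prop :=
  F.Nonempty ∧ (∀ a ∈ F, ∀ b ∈ F, ∃ c ∈ F, nle c a ∧ nle c b) ∧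
    ∀ a ∈ F, ∀ b : S, nle a b → b ∈ F

/-- An order ideal: a downward-closed subset. -/
def IsOrderIdeal (A : Set S) : Prop := ∀ x ∈ A, ∀ y : S, nle y x → y ∈ A

end Basic

/-- An inverse semigroup with a (multiplicative) zero element. -/
class InverseSemigroupWithZero (S : Type*) extends InverseSemigroup S, Zero S where
  zmul : ∀ a : S, 0 * a = 0
  mulz : ∀ a : S, a * 0 = 0

section WithZero
variable [InverseSemigroupWithZero S]

/-- A proper filter: a filter not containing `0`. -/
def IsProperFilter (F : Set S) : Prop := IsFilter F ∧ (0 : S) ∉ F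

/-- An ultrafilter: a maximal proper filter. -/
def IsUltrafilter (F : Set S) : Prop :=
  IsProperFilter F ∧ ∀ G : Set S, IsProperFilter G → F ⊆ G → G = F

/-- A prime filter: a proper filter `F` such that whenever a join `a ∨ b` exists and
lies in `F`, then `a ∈ F` or `b ∈ F`. -/
def IsPrimeFilter (F : Set S) : Prop :=
  IsProperFilter F ∧ ∀ a b j : S, isJoin a b j → j ∈ F → a ∈ F ∨ b ∈ F

/-- `d(F) = (F⁻¹F)↑`, the upward closure of `{a⁻¹b : a, b ∈ F}`. -/
def dClosure (F : Set S) : Set S :=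
  {x | ∃ a ∈ F, ∃ b ∈ F, nle (InverseSemigroup.sinv a * b) x}

/-- `r(F) = (FF⁻¹)↑`, the upward closure of `{ab⁻¹ : a, b ∈ F}`. -/
def rClosure (F : Set S) : Set S :=
  {x | ∃ a ∈ F, ∃ b ∈ F, nle (a * InverseSemigroup.sinv b) x}

/-- The product of two filters: `F · G = (FG)↑`. -/
def filterMul (F G : Set S) : Set S :=
  {x | ∃ a ∈ F, ∃ b ∈ G, nle (a * b) x}

/-- `A` is ∨-closed: closed under existing joins of finite nonempty compatible subsets. -/
def IsVeeClosed (A : Set S) : Prop :=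
  ∀ Y : Finset S, Y.Nonempty → ↑Y ⊆ A → (∀ a ∈ Y, ∀ b ∈ Y, compatible a b) →
    ∀ j : S, isJoinSet (↑Y : Set S) j → j ∈ A

/-- The ∨-closure `A^∨`: all existing joins of finite nonempty compatible subsets of `A`. -/
def veeClosure (A : Set S) : Set S :=
  {x | ∃ Y : Finset S, Y.Nonempty ∧ ↑Y ⊆ A ∧ (∀ a ∈ Y, ∀ b ∈ Y, compatible a b) ∧
    isJoinSet (↑Y : Set S) x}

/-- A prime order ideal: if every common lower bound of `a` and `b` lies in `P`,
then `a ∈ P` or `b ∈ P`. -/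
def IsPrimeOrderIdeal (P : Set S) : Prop :=
  ∀ a b : S, (∀ z : S, nle z a → nle z b → z ∈ P) → a ∈ P ∨ b ∈ P

/-- The set of prime filters containing `s`. -/
def Xset (s : S) : Set (Set S) := {F | IsPrimeFilter F ∧ s ∈ F}

end WithZero

/-- A distributive inverse semigroup: compatible pairs have joins and
multiplication distributes over these joins. -/
class DistributiveInverseSemigroup (S : Type*) extends InverseSemigroupWithZero S where
  joins_exist : ∀ a b : S, compatible a b → ∃ j : S, isJoin a b j
  mul_distrib_left : ∀ a b j c : S, compatible a b → isJoin a b j →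
    isJoin (c * a) (c * b) (c * j)
  mul_distrib_right : ∀ a b j c : S, compatible a b → isJoin a b j →
    isJoin (a * c) (b * c) (j * c)

/-- A distributive inverse semigroup is Boolean if its idempotents form a generalized
Boolean algebra: relative complements of idempotents exist. -/
def IsBoolean (S : Type*) [DistributiveInverseSemigroup S] : Prop :=
  ∀ e f : S, idem e → idem f → nle e f →
    ∃ g : S, idem g ∧ e * g = 0 ∧ isJoin e g f

/-- A pseudogroup: an inverse semigroup with joins of all nonempty compatible subsets,
over which multiplication distributes. -/
class Pseudogroup (S : Type*) extends InverseSemigroup S where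
  joins_exist : ∀ A : Set S, A.Nonempty → (∀ a ∈ A, ∀ b ∈ A, compatible a b) →
    ∃ j : S, isJoinSet A j
  mul_distrib_left : ∀ (A : Set S) (j c : S), isJoinSet A j →
    isJoinSet ((c * ·) '' A) (c * j)
  mul_distrib_right : ∀ (A : Set S) (j c : S), isJoinSet A j →
    isJoinSet ((· * c) '' A) (j * c)

/-- A nucleus on a pseudogroup. -/
structure PNucleus (S : Type*) [Pseudogroup S] where
  toFun : S → S
  le_self : ∀ a : S, nle a (toFun a)
  mono : ∀ a b : S, nle a b → nle (toFun a) (toFun b)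
  idempotent : ∀ a : S, toFun (toFun a) = toFun a
  mul_le : ∀ a b : S, nle (toFun a * toFun b) (toFun (a * b))
  idem_pres : ∀ e : S, idem e → idem (toFun e)

/-- The set `S_ν` of `ν`-closed elements. -/
def Fix {S : Type*} [Pseudogroup S] (ν : PNucleus S) := {a : S // ν.toFun a = a}

/-- The multiplication on `S_ν`: `a · b = ν(ab)`. -/
instance {S : Type*} [Pseudogroup S] (ν : PNucleus S) : Mul (Fix ν) :=
  ⟨fun a b => ⟨ν.toFun (a.1 * b.1), ν.idempotent _⟩⟩

/-- The map `a ↦ ν(a)` from `S` to `S_ν`. -/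
def fixMap {S : Type*} [Pseudogroup S] (ν : PNucleus S) : S → Fix ν :=
  fun a => ⟨ν.toFun a, ν.idempotent a⟩

section NaturalOrder

variable {T : Type*} [InverseSemigroup T]

theorem idem.mul {e f : T} (he : idem e) (hf : idem f) : idem (e * f) :=
  calc e * f * (e * f) = e * (f * e) * f := by simp only [mul_assoc]
    _ = e * (e * f) * f := by rw [idem_comm e f he hf]
    _ = e * f := by rw [← mul_assoc, he, mul_assoc, hf]

theorem idem_mul_sinv (a : T) : idem (a * sinv a) :=
  calc a * sinv a * (a * sinv a) = a * sinv a * a * sinv a := by simp only [mul_assoc]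
    _ = a * sinv a := by rw [mul_sinv_mul]

theorem idem_sinv_mul_mul {e : T} (he : idem e) (c : T) : idem (sinv c * e * c) :=
  calc sinv c * e * c * (sinv c * e * c) = sinv c * (e * (c * sinv c)) * (e * c) := by
        simp only [mul_assoc]
    _ = sinv c * (c * sinv c * e) * (e * c) := by rw [idem_comm e _ he (idem_mul_sinv c)]
    _ = sinv c * c * sinv c * (e * e) * c := by simp only [mul_assoc]
    _ = sinv c * e * c := by rw [he, sinv_mul_sinv]

theorem nle_mul_idem (a : T) {e : T} (he : idem e) : nle (a * e) a := ⟨e, he, rfl⟩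

theorem nle_trans {a b c : T} : nle a b → nle b c → nle a c := by
  rintro ⟨e, he, rfl⟩ ⟨f, hf, rfl⟩
  exact ⟨f * e, hf.mul he, mul_assoc _ _ _⟩

theorem nle_antisymm {a b : T} : nle a b → nle b a → a = b := by
  rintro ⟨e, he, rfl⟩ ⟨f, hf, hb⟩
  have hfef : f * e * f = f * e := by
    rw [mul_assoc, idem_comm e f he hf, ← mul_assoc, hf]
  have hbe : b * e = b * e * f * e := by rw [← hb]
  have hbef : b * e * f = b * e :=
    calc b * e * f = b * e * f * e * f := by rw [← hbe]
      _ = b * e * (f * e * f) := by simp only [mul_assoc]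
      _ = b * e * f * e := by rw [hfef]; simp only [mul_assoc]
      _ = b * e := hbe.symm
  exact (hb.trans hbef).symm

theorem nle_mul_left (c : T) {a b : T} : nle a b → nle (c * a) (c * b) := by
  rintro ⟨e, he, rfl⟩
  exact ⟨e, he, (mul_assoc _ _ _).symm⟩

/-- Moving `e` past `c` turns it into the conjugate idempotent `c⁻¹ e c`. -/
theorem nle_mul_right (c : T) {a b : T} : nle a b → nle (a * c) (b * c) := by
  rintro ⟨e, he, rfl⟩
  refine ⟨sinv c * e * c, idem_sinv_mul_mul he c, ?_⟩
  calc b * e * c = b * e * (c * sinv c * c) := by rw [mul_sinv_mul]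
    _ = b * (e * (c * sinv c)) * c := by simp only [mul_assoc]
    _ = b * (c * sinv c * e) * c := by rw [idem_comm e _ he (idem_mul_sinv c)]
    _ = b * c * (sinv c * e * c) := by simp only [mul_assoc]

theorem nle_mul {a b c d : T} (hab : nle a b) (hcd : nle c d) : nle (a * c) (b * d) :=
  nle_trans (nle_mul_right c hab) (nle_mul_left b hcd)

theorem idem_of_nle {a e : T} (h : nle a e) (he : idem e) : idem a := by
  obtain ⟨f, hf, rfl⟩ := h
  exact he.mul hf

/-- From `x² = x e` one gets `x³ = x²`. -/
theorem idem_mul_self_of_nle {x : T} (h : nle (x * x) x) : idem (x * x) := by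
  obtain ⟨e, he, hxx⟩ := h
  have hcube : x * x * x = x * x := by
    rw [mul_assoc, hxx, ← mul_assoc, hxx, mul_assoc, he]
  change x * x * (x * x) = x * x
  rw [← mul_assoc, hcube, hcube]

end NaturalOrder

namespace PNucleus

variable {T : Type*} [Pseudogroup T] (ν : PNucleus T)

theorem eq_of_nle_of_nle {u v : T} (huv : nle u v) (hv : nle v (ν.toFun u)) :
    ν.toFun u = ν.toFun v := by
  refine nle_antisymm (ν.mono _ _ huv) ?_
  simpa only [ν.idempotent] using ν.mono _ _ hv

theorem apply_apply_mul_apply (a b : T) : ν.toFun (ν.toFun a * ν.toFun b) = ν.toFun (a * b) :=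
  (ν.eq_of_nle_of_nle (nle_mul (ν.le_self a) (ν.le_self b)) (ν.mul_le a b)).symm

theorem apply_apply_mul (a b : T) : ν.toFun (ν.toFun a * b) = ν.toFun (a * b) := by
  rw [← apply_apply_mul_apply, ν.idempotent, apply_apply_mul_apply]

theorem apply_mul_apply (a b : T) : ν.toFun (a * ν.toFun b) = ν.toFun (a * b) := by
  rw [← apply_apply_mul_apply, ν.idempotent, apply_apply_mul_apply]

theorem apply_mul_apply_mul (a b c : T) :
    ν.toFun (a * ν.toFun b * c) = ν.toFun (a * b * c) := by
  rw [← apply_apply_mul, apply_mul_apply, apply_apply_mul]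

theorem idem_of_apply_mul_self {x : T} (h : ν.toFun (x * x) = x) : idem x := by
  have hle : nle (x * x) x := by simpa only [h] using ν.le_self (x * x)
  simpa only [h] using ν.idem_pres _ (idem_mul_self_of_nle hle)

end PNucleus

namespace Fix

variable {T : Type*} [Pseudogroup T] {ν : PNucleus T}

theorem mul_val (a b : Fix ν) : (a * b).1 = ν.toFun (a.1 * b.1) := rfl

theorem idem_val {e : Fix ν} (he : e * e = e) : idem e.1 :=
  ν.idem_of_apply_mul_self (congrArg Subtype.val he)

theorem mul_assoc (a b c : Fix ν) : a * b * c = a * (b * c) :=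
  Subtype.ext <| by
    simp only [mul_val, ν.apply_apply_mul, ν.apply_mul_apply, _root_.mul_assoc]

theorem exists_mul_mul_eq (a : Fix ν) : ∃ b : Fix ν, a * b * a = a ∧ b * a * b = b := by
  refine ⟨fixMap ν (sinv a.1), Subtype.ext ?_, Subtype.ext ?_⟩
  · change ν.toFun (ν.toFun (a.1 * ν.toFun (sinv a.1)) * a.1) = a.1
    rw [ν.apply_apply_mul, ν.apply_mul_apply_mul, mul_sinv_mul, a.2]
  · change ν.toFun (ν.toFun (ν.toFun (sinv a.1) * a.1) * ν.toFun (sinv a.1)) =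
      ν.toFun (sinv a.1)
    rw [ν.apply_apply_mul, ν.apply_mul_apply, _root_.mul_assoc, ν.apply_apply_mul,
      ← _root_.mul_assoc, sinv_mul_sinv]

theorem idem_comm (e f : Fix ν) (he : e * e = e) (hf : f * f = f) : e * f = f * e :=
  Subtype.ext <| by
    simp only [mul_val, InverseSemigroup.idem_comm e.1 f.1 (idem_val he) (idem_val hf)]

theorem nle_iff (a b : Fix ν) : (∃ e : Fix ν, e * e = e ∧ a = b * e) ↔ nle a.1 b.1 := by
  constructor
  · rintro ⟨e, he, rfl⟩
    change nle (ν.toFun (b.1 * e.1)) b.1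
    simpa only [b.2] using ν.mono _ _ (nle_mul_idem b.1 (idem_val he))
  · rintro ⟨g, hg, hab⟩
    refine ⟨fixMap ν g, Subtype.ext ?_, Subtype.ext ?_⟩
    · change ν.toFun (ν.toFun g * ν.toFun g) = ν.toFun g
      rw [ν.apply_apply_mul_apply, hg]
    · change a.1 = ν.toFun (b.1 * ν.toFun g)
      rw [ν.apply_mul_apply, ← hab, a.2]

end Fix

section fixMap

variable {T : Type*} [Pseudogroup T] (ν : PNucleus T)

theorem fixMap_surjective : Function.Surjective (fixMap ν) :=
  fun x => ⟨x.1, Subtype.ext x.2⟩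

theorem fixMap_mul (a b : T) : fixMap ν (a * b) = fixMap ν a * fixMap ν b :=
  Subtype.ext (ν.apply_apply_mul_apply a b).symm

theorem idem_of_fixMap_mul_self {s : T} (h : fixMap ν s * fixMap ν s = fixMap ν s) : idem s :=
  idem_of_nle (ν.le_self s) (Fix.idem_val h)

end fixMap

/-- `(S_ν, ·)` is an inverse semigroup, its natural partial order
coincides with the restriction of that of `S`, and `a ↦ ν(a)` is a surjective
idempotent-pure semigroup homomorphism onto it. -/
theorem stmt18 {S : Type*} [Pseudogroup S] (ν : PNucleus S) :
    -- `S_ν` is a semigroup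
    (∀ a b c : Fix ν, a * b * c = a * (b * c)) ∧
    -- regularity: every element has a generalized inverse
    (∀ a : Fix ν, ∃ b : Fix ν, a * b * a = a ∧ b * a * b = b) ∧
    -- idempotents commute, so `S_ν` is an inverse semigroup
    (∀ e f : Fix ν, e * e = e → f * f = f → e * f = f * e) ∧
    -- the natural partial order on `S_ν` coincides with that of `S`
    (∀ a b : Fix ν, (∃ e : Fix ν, e * e = e ∧ a = b * e) ↔ nle a.1 b.1) ∧
    -- `a ↦ ν(a)` is surjective
    Function.Surjective (fixMap ν) ∧
    -- `a ↦ ν(a)` is a semigroup homomorphism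
    (∀ a b : S, fixMap ν (a * b) = fixMap ν a * fixMap ν b) ∧
    -- `a ↦ ν(a)` is idempotent-pure
    (∀ s : S, fixMap ν s * fixMap ν s = fixMap ν s → idem s) :=
  ⟨Fix.mul_assoc, Fix.exists_mul_mul_eq, Fix.idem_comm, Fix.nle_iff,
    fixMap_surjective ν, fixMap_mul ν, fun _ => idem_of_fixMap_mul_self ν⟩

end InvPaper
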